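/- arXiv:0804.4404 — 2 statements merged into one kernel-verified Lean document; each statement's English description precedes it below -/
import Mathlib

section
/- Let K ≥ 1 be an integer, t > 0, and let u be a C² map from a neighborhood of the closed disc of radius t centered at 0 in ℝ² to ℝ^K. Then ∫_{B_t(0)} (x·∇u(x))·Δu(x) dx = t² ∫₀^{2π} |∂_r u(t e^{iθ})|² dθ − (t²/2) ∫₀^{2π} |∇u(t e^{iθ})|² dθ, where Δ is the componentwise Laplacian, x·∇u = x₁∂₁u + x₂∂₂u, and the radial derivative is taken with respect to the center 0. -/
/-!
The integrand is the divergence of the Pohozaev field `W_j = (x·∇u)·∂ⱼu − ½|∇u|² xⱼ`: the terms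
`xₖ ∂ᵢ∂ₖu·∂ᵢu` cancel by the symmetry of the second derivative. The divergence theorem on the
disc is proved in polar coordinates, where `r · div W` is a radial plus an angular derivative, by
Fubini and the fundamental theorem of calculus on `(0, t) × (−π, π)`; the angular part vanishes by
periodicity. What remains is the boundary flux `∫₀^{2π} W(x)·x dθ` over `|x| = t`, and there
`W·x = |x·∇u|² − ½|∇u|²|x|² = t²|∂_r u|² − (t²/2)|∇u|²`.
-/

open MeasureTheory Metric Filter
open scoped Topology Real RealInnerProductSpace ENNReal NNReal

noncomputable section

abbrev E2 := EuclideanSpace ℝ (Fin 2)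

/-- The point `(cos θ, sin θ)` on the unit circle of `ℝ²`. -/
def circ (θ : ℝ) : E2 := (WithLp.equiv 2 (Fin 2 → ℝ)).symm ![Real.cos θ, Real.sin θ]

section Defs

variable {F : Type*} [NormedAddCommGroup F] [NormedSpace ℝ F]

/-- The `i`-th partial derivative `∂ᵢ u`. -/
def pd (u : E2 → F) (i : Fin 2) (x : E2) : F := fderiv ℝ u x (EuclideanSpace.single i 1)

/-- `|∇u|² = |∂₁u|² + |∂₂u|²`. -/
def gradSq (u : E2 → F) (x : E2) : ℝ := ‖pd u 0 x‖ ^ 2 + ‖pd u 1 x‖ ^ 2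

/-- The componentwise Laplacian `Δu = ∂₁∂₁u + ∂₂∂₂u`. -/
def lap (u : E2 → F) (x : E2) : F :=
  fderiv ℝ (pd u 0) x (EuclideanSpace.single 0 1) + fderiv ℝ (pd u 1) x (EuclideanSpace.single 1 1)

/-- `∇(|∇u|²)·∇u = ∂₁(|∇u|²) ∂₁u + ∂₂(|∇u|²) ∂₂u`. -/
def gradDotGrad (u : E2 → F) (x : E2) : F :=
  fderiv ℝ (gradSq u) x (EuclideanSpace.single 0 1) • pd u 0 x
    + fderiv ℝ (gradSq u) x (EuclideanSpace.single 1 1) • pd u 1 x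

/-- The radial derivative `∂_r u(x) = ((x−x₀)/|x−x₀|)·∇u(x)` with respect to the center `x₀`. -/
def rderiv (x₀ : E2) (u : E2 → F) (x : E2) : F := fderiv ℝ u x (‖x - x₀‖⁻¹ • (x - x₀))

end Defs

/-- `u` is a smooth `(α,ε)`-harmonic map from `Ω ⊆ ℝ²` into the unit sphere `Sⁿ ⊆ ℝ^{n+1}`:
`u` is smooth on `Ω`, sphere-valued, and satisfies
`Δu + (α−1)·(∇(|∇u|²)·∇u)/(ε+|∇u|²) + |∇u|²·u = 0` on `Ω`. -/
def IsAlphaHarmonic (n : ℕ) (α ε : ℝ) (Ω : Set E2) (u : E2 → EuclideanSpace ℝ (Fin (n+1))) :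
    Prop :=
  ContDiffOn ℝ (⊤ : ℕ∞) u Ω ∧ (∀ x ∈ Ω, ‖u x‖ = 1) ∧
    ∀ x ∈ Ω, lap u x + ((α - 1) / (ε + gradSq u x)) • gradDotGrad u x + gradSq u x • u x = 0

open Set

namespace E2

lemma map_eq_smul_add_smul {G : Type*} [AddCommGroup G] [Module ℝ G] [TopologicalSpace G]
    (L : E2 →L[ℝ] G) (v : E2) :
    L v = v 0 • L (EuclideanSpace.single 0 1) + v 1 • L (EuclideanSpace.single 1 1) := by
  conv_lhs => rw [← (EuclideanSpace.basisFun (Fin 2) ℝ).sum_repr v]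
  simp [Fin.sum_univ_two]

lemma norm_sq_eq (v : E2) : ‖v‖ ^ 2 = v 0 ^ 2 + v 1 ^ 2 := by
  simp [EuclideanSpace.norm_sq_eq, Fin.sum_univ_two]

end E2

@[simp] lemma circ_apply_zero (θ : ℝ) : circ θ 0 = Real.cos θ := rfl

@[simp] lemma circ_apply_one (θ : ℝ) : circ θ 1 = Real.sin θ := rfl

lemma circ_eq_smul_add_smul (θ : ℝ) :
    circ θ = Real.cos θ • EuclideanSpace.single 0 1 + Real.sin θ • EuclideanSpace.single 1 1 := by
  simpa using E2.map_eq_smul_add_smul (ContinuousLinearMap.id ℝ E2) (circ θ)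

@[fun_prop]
lemma contDiff_circ {n : WithTop ℕ∞} : ContDiff ℝ n circ := by
  rw [funext circ_eq_smul_add_smul]; fun_prop

@[fun_prop]
lemma differentiable_circ : Differentiable ℝ circ :=
  contDiff_circ.differentiable one_ne_zero

lemma hasDerivAt_circ (θ : ℝ) :
    HasDerivAt circ
      (-Real.sin θ • EuclideanSpace.single 0 1 + Real.cos θ • EuclideanSpace.single 1 1) θ := by
  rw [funext circ_eq_smul_add_smul]
  exact ((Real.hasDerivAt_cos θ).smul_const _).add ((Real.hasDerivAt_sin θ).smul_const _)

lemma norm_circ (θ : ℝ) : ‖circ θ‖ = 1 := by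
  simp [EuclideanSpace.norm_eq, Fin.sum_univ_two]

lemma circ_periodic : Function.Periodic circ (2 * π) := by
  intro θ; simp [circ, Real.cos_add_two_pi, Real.sin_add_two_pi]

lemma ContDiffOn.integrableOn_fderiv_apply {E G : Type*} [NormedAddCommGroup E] [NormedSpace ℝ E]
    [MeasurableSpace E] [OpensMeasurableSpace E] [NormedAddCommGroup G] [NormedSpace ℝ G]
    {μ : Measure E} [IsFiniteMeasureOnCompacts μ] {f : E → G} {U K : Set E}
    (hf : ContDiffOn ℝ 1 f U) (hU : IsOpen U) (hK : IsCompact K) (hKU : K ⊆ U) (v : E) :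
    IntegrableOn (fun p => fderiv ℝ f p v) K μ :=
  (((hf.continuousOn_fderiv_of_isOpen hU le_rfl).mono hKU).clm_apply
    continuousOn_const).integrableOn_compact hK

section Rectangle

variable {G : Type*} [NormedAddCommGroup G] [NormedSpace ℝ G]

lemma DifferentiableAt.hasDerivAt_slice_fst {F : ℝ × ℝ → G} {x y : ℝ}
    (h : DifferentiableAt ℝ F (x, y)) :
    HasDerivAt (fun s => F (s, y)) (fderiv ℝ F (x, y) (1, 0)) x :=
  h.hasFDerivAt.comp_hasDerivAt x ((hasDerivAt_id x).prodMk (hasDerivAt_const x y))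

lemma DifferentiableAt.hasDerivAt_slice_snd {F : ℝ × ℝ → G} {x y : ℝ}
    (h : DifferentiableAt ℝ F (x, y)) :
    HasDerivAt (fun s => F (x, s)) (fderiv ℝ F (x, y) (0, 1)) y :=
  h.hasFDerivAt.comp_hasDerivAt y ((hasDerivAt_const y x).prodMk (hasDerivAt_id y))

variable [CompleteSpace G] {F : ℝ × ℝ → G} {U : Set (ℝ × ℝ)} {a b c d : ℝ}

lemma integral_Ioo_eq_sub_of_hasDerivAt {f f' : ℝ → G} (hab : a ≤ b)
    (hf : ∀ s ∈ Icc a b, HasDerivAt f (f' s) s) (hf' : ContinuousOn f' (Icc a b)) :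
    ∫ s in Ioo a b, f' s = f b - f a := by
  rw [← integral_Ioc_eq_integral_Ioo, ← intervalIntegral.integral_of_le hab]
  rw [← uIcc_of_le hab] at hf hf'
  exact intervalIntegral.integral_eq_sub_of_hasDerivAt hf hf'.intervalIntegrable

lemma setIntegral_Ioo_prod_Ioo_fderiv_fst (hU : IsOpen U) (hF : ContDiffOn ℝ 1 F U)
    (hab : a ≤ b) (hcd : c ≤ d) (hsub : Icc a b ×ˢ Icc c d ⊆ U) :
    ∫ p in Ioo a b ×ˢ Ioo c d, fderiv ℝ F p (1, 0) = ∫ y in c..d, (F (b, y) - F (a, y)) := by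
  have hint := (hF.integrableOn_fderiv_apply (μ := volume) hU (isCompact_Icc.prod isCompact_Icc)
    hsub (1, 0)).mono_set (prod_mono Ioo_subset_Icc_self Ioo_subset_Icc_self)
  rw [Measure.volume_eq_prod, IntegrableOn, ← Measure.prod_restrict] at hint
  rw [Measure.volume_eq_prod, ← Measure.prod_restrict, integral_prod_symm _ hint,
    intervalIntegral.integral_of_le hcd, integral_Ioc_eq_integral_Ioo]
  refine setIntegral_congr_fun measurableSet_Ioo fun y hy => ?_
  have hmem : ∀ s ∈ Icc a b, (s, y) ∈ U := fun s hs => hsub ⟨hs, Ioo_subset_Icc_self hy⟩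
  refine integral_Ioo_eq_sub_of_hasDerivAt hab
    (fun s hs => ((hF.differentiableOn one_ne_zero).differentiableAt
      (hU.mem_nhds (hmem s hs))).hasDerivAt_slice_fst) ?_
  exact ((hF.continuousOn_fderiv_of_isOpen hU le_rfl).comp (by fun_prop) hmem).clm_apply
    continuousOn_const

lemma setIntegral_Ioo_prod_Ioo_fderiv_snd (hU : IsOpen U) (hF : ContDiffOn ℝ 1 F U)
    (hab : a ≤ b) (hcd : c ≤ d) (hsub : Icc a b ×ˢ Icc c d ⊆ U) :
    ∫ p in Ioo a b ×ˢ Ioo c d, fderiv ℝ F p (0, 1) = ∫ x in a..b, (F (x, d) - F (x, c)) := by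
  have hint := (hF.integrableOn_fderiv_apply (μ := volume) hU (isCompact_Icc.prod isCompact_Icc)
    hsub (0, 1)).mono_set (prod_mono Ioo_subset_Icc_self Ioo_subset_Icc_self)
  rw [Measure.volume_eq_prod] at hint
  rw [Measure.volume_eq_prod, setIntegral_prod _ hint,
    intervalIntegral.integral_of_le hab, integral_Ioc_eq_integral_Ioo]
  refine setIntegral_congr_fun measurableSet_Ioo fun x hx => ?_
  have hmem : ∀ s ∈ Icc c d, (x, s) ∈ U := fun s hs => hsub ⟨Ioo_subset_Icc_self hx, hs⟩
  refine integral_Ioo_eq_sub_of_hasDerivAt hcd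
    (fun s hs => ((hF.differentiableOn one_ne_zero).differentiableAt
      (hU.mem_nhds (hmem s hs))).hasDerivAt_slice_snd) ?_
  exact ((hF.continuousOn_fderiv_of_isOpen hU le_rfl).comp (by fun_prop) hmem).clm_apply
    continuousOn_const

end Rectangle

lemma setIntegral_ball_eq_polar (f : E2 → ℝ) (t : ℝ) :
    ∫ x in ball (0 : E2) t, f x = ∫ p in Ioo 0 t ×ˢ Ioo (-π) π, p.1 * f (p.1 • circ p.2) := by
  let e : ℝ × ℝ ≃ᵐ E2 := MeasurableEquiv.finTwoArrow.symm.trans (MeasurableEquiv.toLp 2 (Fin 2 → ℝ))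
  have he : MeasurePreserving e :=
    (PiLp.volume_preserving_toLp (Fin 2)).comp (volume_preserving_finTwoArrow ℝ).symm
  have he_polar : ∀ p : ℝ × ℝ, e (polarCoord.symm p) = p.1 • circ p.2 := by
    intro p; ext i; fin_cases i <;> simp [e, circ]
  have hball : ∀ p ∈ polarCoord.target, p.1 • (ball (0 : E2) t).indicator f (e (polarCoord.symm p))
      = (Iio t ×ˢ univ).indicator (fun p => p.1 * f (p.1 • circ p.2)) p := by
    rintro ⟨r, θ⟩ ⟨hr, -⟩
    have hr : 0 < r := hr
    simp only [he_polar, indicator, mem_ball, dist_zero_right, norm_smul, norm_circ,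
      Real.norm_of_nonneg hr.le, mul_one, mem_prod, mem_Iio, mem_univ, and_true]
    split_ifs <;> simp
  have htarget : polarCoord.target ∩ Iio t ×ˢ univ = Ioo 0 t ×ˢ Ioo (-π) π := by
    ext ⟨r, θ⟩
    simp only [polarCoord_target, mem_inter_iff, mem_prod, mem_Ioi, mem_Ioo, mem_Iio, mem_univ,
      and_true]
    tauto
  calc ∫ x in ball (0 : E2) t, f x = ∫ x, (ball (0 : E2) t).indicator f x :=
        (integral_indicator measurableSet_ball).symm
    _ = ∫ p, (ball (0 : E2) t).indicator f (e p) :=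
        (he.integral_comp e.measurableEmbedding _).symm
    _ = ∫ p in polarCoord.target, p.1 • (ball (0 : E2) t).indicator f (e (polarCoord.symm p)) :=
        (integral_comp_polarCoord_symm _).symm
    _ = ∫ p in polarCoord.target, (Iio t ×ˢ univ).indicator (fun p => p.1 * f (p.1 • circ p.2)) p :=
        setIntegral_congr_fun polarCoord.open_target.measurableSet hball
    _ = _ := by
        rw [setIntegral_indicator (measurableSet_Iio.prod MeasurableSet.univ), htarget]

section Flux

variable (W₀ W₁ : E2 → ℝ)

/-- `radialFlux = ⟪W, x⟫` and `angularFlux = ⟪W, e_θ⟫` at `x = r e^{iθ}`, so that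
`r · div W = ∂_r radialFlux + ∂_θ angularFlux`. -/
def radialFlux (p : ℝ × ℝ) : ℝ :=
  W₀ (p.1 • circ p.2) * (p.1 * Real.cos p.2) + W₁ (p.1 • circ p.2) * (p.1 * Real.sin p.2)

def angularFlux (p : ℝ × ℝ) : ℝ :=
  W₁ (p.1 • circ p.2) * Real.cos p.2 - W₀ (p.1 • circ p.2) * Real.sin p.2

variable {W₀ W₁}

lemma fderiv_radialFlux_add_fderiv_angularFlux {r θ : ℝ}
    (h₀ : DifferentiableAt ℝ W₀ (r • circ θ)) (h₁ : DifferentiableAt ℝ W₁ (r • circ θ)) :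
    fderiv ℝ (radialFlux W₀ W₁) (r, θ) (1, 0) + fderiv ℝ (angularFlux W₀ W₁) (r, θ) (0, 1)
      = r * (pd W₀ 0 (r • circ θ) + pd W₁ 1 (r • circ θ)) := by
  have hP : DifferentiableAt ℝ (fun p : ℝ × ℝ => p.1 • circ p.2) (r, θ) := by fun_prop
  have hW₀P := h₀.comp (r, θ) hP
  have hW₁P := h₁.comp (r, θ) hP
  have hradial : DifferentiableAt ℝ (radialFlux W₀ W₁) (r, θ) := by
    unfold radialFlux; fun_prop
  have hangular : DifferentiableAt ℝ (angularFlux W₀ W₁) (r, θ) := by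
    unfold angularFlux; fun_prop
  have hs : HasDerivAt (fun s : ℝ => s • circ θ) (circ θ) r := by
    simpa using (hasDerivAt_id r).smul_const (circ θ)
  have hθ := (hasDerivAt_circ θ).const_smul r
  have hr := ((h₀.hasFDerivAt.comp_hasDerivAt r hs).fun_mul
      ((hasDerivAt_id' r).mul_const (Real.cos θ))).fun_add
    ((h₁.hasFDerivAt.comp_hasDerivAt r hs).fun_mul ((hasDerivAt_id' r).mul_const (Real.sin θ)))
  have ha := ((h₁.hasFDerivAt.comp_hasDerivAt θ hθ).fun_mul (Real.hasDerivAt_cos θ)).fun_sub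
    ((h₀.hasFDerivAt.comp_hasDerivAt θ hθ).fun_mul (Real.hasDerivAt_sin θ))
  rw [hradial.hasDerivAt_slice_fst.unique hr, hangular.hasDerivAt_slice_snd.unique ha]
  simp only [E2.map_eq_smul_add_smul _ (circ θ), map_smul, map_add, circ_apply_zero,
    circ_apply_one, smul_eq_mul, Function.comp_apply]
  unfold pd
  linear_combination (r * (fderiv ℝ W₀ (r • circ θ) (EuclideanSpace.single 0 1)
    + fderiv ℝ W₁ (r • circ θ) (EuclideanSpace.single 1 1))) * Real.sin_sq_add_cos_sq θ

end Flux

lemma smul_circ_mem_closedBall {r t θ : ℝ} (hr : |r| ≤ t) : r • circ θ ∈ closedBall (0 : E2) t := by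
  simpa [norm_smul, norm_circ] using hr

theorem integral_divergence_ball {W₀ W₁ : E2 → ℝ} {Ω : Set E2} {t : ℝ} (hΩ : IsOpen Ω)
    (ht : 0 ≤ t) (hsub : closedBall 0 t ⊆ Ω) (hW₀ : ContDiffOn ℝ 1 W₀ Ω)
    (hW₁ : ContDiffOn ℝ 1 W₁ Ω) :
    ∫ x in ball (0 : E2) t, (pd W₀ 0 x + pd W₁ 1 x) = ∫ θ in 0..2 * π, radialFlux W₀ W₁ (t, θ) := by
  set U := (fun p : ℝ × ℝ => p.1 • circ p.2) ⁻¹' Ω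
  have hU : IsOpen U := hΩ.preimage (by fun_prop)
  have hP : ContDiffOn ℝ 1 (fun p : ℝ × ℝ => p.1 • circ p.2) U := by fun_prop
  have hW₀P := hW₀.comp hP (mapsTo_preimage _ _)
  have hW₁P := hW₁.comp hP (mapsTo_preimage _ _)
  have hradial : ContDiffOn ℝ 1 (radialFlux W₀ W₁) U := by
    unfold radialFlux
    exact (hW₀P.mul (by fun_prop)).add (hW₁P.mul (by fun_prop))
  have hangular : ContDiffOn ℝ 1 (angularFlux W₀ W₁) U := by
    unfold angularFlux
    exact (hW₁P.mul (by fun_prop)).sub (hW₀P.mul (by fun_prop))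
  have hπ : -π ≤ π := by linarith [Real.pi_pos]
  have hrect : Icc 0 t ×ˢ Icc (-π) π ⊆ U := fun p hp =>
    hsub (smul_circ_mem_closedBall (abs_le.2 ⟨by linarith [hp.1.1], hp.1.2⟩))
  have hrect' : Ioo 0 t ×ˢ Ioo (-π) π ⊆ Icc 0 t ×ˢ Icc (-π) π :=
    prod_mono Ioo_subset_Icc_self Ioo_subset_Icc_self
  have hdiff : ∀ {W : E2 → ℝ}, ContDiffOn ℝ 1 W Ω → ∀ p ∈ Ioo 0 t ×ˢ Ioo (-π) π,
      DifferentiableAt ℝ W (p.1 • circ p.2) := fun hW p hp =>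
    (hW.differentiableOn one_ne_zero).differentiableAt (hΩ.mem_nhds (hrect (hrect' hp)))
  have hint : ∀ {F : ℝ × ℝ → ℝ}, ContDiffOn ℝ 1 F U → ∀ v,
      IntegrableOn (fun p => fderiv ℝ F p v) (Ioo 0 t ×ˢ Ioo (-π) π) :=
    fun hF v =>
      (hF.integrableOn_fderiv_apply hU (isCompact_Icc.prod isCompact_Icc) hrect v).mono_set hrect'
  calc ∫ x in ball (0 : E2) t, (pd W₀ 0 x + pd W₁ 1 x)
      = ∫ p in Ioo 0 t ×ˢ Ioo (-π) π, p.1 * (pd W₀ 0 (p.1 • circ p.2) + pd W₁ 1 (p.1 • circ p.2)) :=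
        setIntegral_ball_eq_polar _ t
    _ = ∫ p in Ioo 0 t ×ˢ Ioo (-π) π,
          (fderiv ℝ (radialFlux W₀ W₁) p (1, 0) + fderiv ℝ (angularFlux W₀ W₁) p (0, 1)) :=
        setIntegral_congr_fun (measurableSet_Ioo.prod measurableSet_Ioo) fun p hp =>
          (fderiv_radialFlux_add_fderiv_angularFlux (hdiff hW₀ p hp) (hdiff hW₁ p hp)).symm
    _ = ∫ θ in -π..π, radialFlux W₀ W₁ (t, θ) := by
        have hcirc : circ π = circ (-π) := by rw [← circ_periodic (-π)]; ring_nf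
        rw [integral_add (hint hradial _) (hint hangular _),
          setIntegral_Ioo_prod_Ioo_fderiv_fst hU hradial ht hπ hrect,
          setIntegral_Ioo_prod_Ioo_fderiv_snd hU hangular ht hπ hrect]
        simp [radialFlux, angularFlux, hcirc]
    _ = ∫ θ in 0..2 * π, radialFlux W₀ W₁ (t, θ) := by
        have hper : Function.Periodic (fun θ => radialFlux W₀ W₁ (t, θ)) (2 * π) := fun θ => by
          simp [radialFlux, circ_periodic θ]
        simpa [two_mul] using hper.intervalIntegral_add_eq (-π) 0

section Pohozaev

variable {F : Type*} [NormedAddCommGroup F] [InnerProductSpace ℝ F]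

lemma hasFDerivAt_pd {u : E2 → F} {x : E2} (h : DifferentiableAt ℝ (fderiv ℝ u) x) (i : Fin 2) :
    HasFDerivAt (pd u i) ((fderiv ℝ (fderiv ℝ u) x).flip (EuclideanSpace.single i 1)) x := by
  have := h.hasFDerivAt.clm_apply (hasFDerivAt_const (EuclideanSpace.single i (1 : ℝ)) x)
  rwa [ContinuousLinearMap.comp_zero, zero_add] at this

lemma rderiv_zero_smul_circ (u : E2 → F) {t : ℝ} (ht : 0 < t) (θ : ℝ) :
    rderiv 0 u (t • circ θ) = fderiv ℝ u (t • circ θ) (circ θ) := by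
  rw [rderiv, sub_zero, norm_smul, norm_circ, Real.norm_of_nonneg ht.le, mul_one, smul_smul,
    inv_mul_cancel₀ ht.ne', one_smul]

def pohozaevField (u : E2 → F) (j : Fin 2) (x : E2) : ℝ :=
  ⟪fderiv ℝ u x x, pd u j x⟫ - gradSq u x / 2 * x j

lemma contDiffOn_pohozaevField {u : E2 → F} {Ω : Set E2} (hΩ : IsOpen Ω)
    (hu : ContDiffOn ℝ 2 u Ω) (j : Fin 2) : ContDiffOn ℝ 1 (pohozaevField u j) Ω := by
  have hDu : ContDiffOn ℝ 1 (fderiv ℝ u) Ω := hu.fderiv_of_isOpen hΩ (by norm_num)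
  have hpd : ∀ i, ContDiffOn ℝ 1 (pd u i) Ω := fun i => hDu.clm_apply contDiffOn_const
  have hcoord : ContDiffOn ℝ 1 (fun x : E2 => x j) Ω :=
    (EuclideanSpace.proj (𝕜 := ℝ) j).contDiff.contDiffOn
  exact ((hDu.clm_apply contDiffOn_id).inner ℝ (hpd j)).sub
    ((((hpd 0).norm_sq ℝ).add ((hpd 1).norm_sq ℝ)).div_const 2 |>.mul hcoord)

lemma fderiv_pohozaevField_apply {u : E2 → F} {x : E2} (h : DifferentiableAt ℝ (fderiv ℝ u) x)
    (j : Fin 2) (v : E2) :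
    fderiv ℝ (pohozaevField u j) x v =
      ⟪fderiv ℝ u x v + fderiv ℝ (fderiv ℝ u) x v x, pd u j x⟫
        + ⟪fderiv ℝ u x x, fderiv ℝ (fderiv ℝ u) x v (EuclideanSpace.single j 1)⟫
        - (⟪pd u 0 x, fderiv ℝ (fderiv ℝ u) x v (EuclideanSpace.single 0 1)⟫
          + ⟪pd u 1 x, fderiv ℝ (fderiv ℝ u) x v (EuclideanSpace.single 1 1)⟫) * x j
        - gradSq u x / 2 * v j := by
  have hcoord : HasFDerivAt (fun y : E2 => y j) (EuclideanSpace.proj (𝕜 := ℝ) j) x :=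
    (EuclideanSpace.proj (𝕜 := ℝ) j).hasFDerivAt
  have hW : pohozaevField u j = fun y =>
      ⟪fderiv ℝ u y y, pd u j y⟫ - (1 / 2) * (‖pd u 0 y‖ ^ 2 + ‖pd u 1 y‖ ^ 2) * y j := by
    ext y; simp only [pohozaevField, gradSq]; ring
  have hderiv := ((h.hasFDerivAt.clm_apply (hasFDerivAt_id x)).inner ℝ (hasFDerivAt_pd h j)).fun_sub
    ((HasFDerivAt.const_mul ((hasFDerivAt_pd h 0).norm_sq.fun_add (hasFDerivAt_pd h 1).norm_sq)
      (1 / 2)).fun_mul hcoord)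
  rw [hW, (by simpa only [id] using hderiv : HasFDerivAt _ _ x).fderiv]
  simp only [gradSq, sub_apply, add_apply, smul_apply, ContinuousLinearMap.comp_apply,
    ContinuousLinearMap.comp_id, ContinuousLinearMap.prod_apply, ContinuousLinearMap.flip_apply,
    fderivInnerCLM_apply, coe_innerSL_apply, PiLp.proj_apply, smul_eq_mul, nsmul_eq_mul,
    real_inner_comm]
  ring

lemma pd_pohozaevField_add {u : E2 → F} {x : E2} (hu : ContDiffAt ℝ 2 u x) :
    pd (pohozaevField u 0) 0 x + pd (pohozaevField u 1) 1 x = ⟪fderiv ℝ u x x, lap u x⟫ := by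
  have h : DifferentiableAt ℝ (fderiv ℝ u) x :=
    (hu.fderiv_right (m := 1) (by norm_num)).differentiableAt one_ne_zero
  have hsymm : IsSymmSndFDerivAt ℝ u x := hu.isSymmSndFDerivAt (by simp)
  have hlap : lap u x =
      fderiv ℝ (fderiv ℝ u) x (EuclideanSpace.single 0 1) (EuclideanSpace.single 0 1)
        + fderiv ℝ (fderiv ℝ u) x (EuclideanSpace.single 1 1) (EuclideanSpace.single 1 1) := by
    simp [lap, (hasFDerivAt_pd h _).fderiv]
  simp only [pd, fderiv_pohozaevField_apply h, hlap]
  rw [E2.map_eq_smul_add_smul (fderiv ℝ (fderiv ℝ u) x (EuclideanSpace.single 0 1)) x,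
    E2.map_eq_smul_add_smul (fderiv ℝ (fderiv ℝ u) x (EuclideanSpace.single 1 1)) x,
    E2.map_eq_smul_add_smul (fderiv ℝ u x) x, hsymm (EuclideanSpace.single 1 1)]
  simp only [gradSq, pd, inner_add_left, inner_add_right, real_inner_smul_left,
    real_inner_smul_right, real_inner_self_eq_norm_sq, PiLp.single_eq_same, real_inner_comm]
  ring

lemma pohozaevField_flux (u : E2 → F) (y : E2) :
    pohozaevField u 0 y * y 0 + pohozaevField u 1 y * y 1
      = ‖fderiv ℝ u y y‖ ^ 2 - gradSq u y / 2 * ‖y‖ ^ 2 := by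
  rw [← real_inner_self_eq_norm_sq, E2.norm_sq_eq]
  nth_rw 2 [E2.map_eq_smul_add_smul (fderiv ℝ u y) y]
  simp only [pohozaevField, inner_add_right, real_inner_smul_right, pd]
  ring

end Pohozaev

theorem stmt1_general (K : ℕ) (t : ℝ) (ht : 0 < t)
    (u : E2 → EuclideanSpace ℝ (Fin K)) (Ω : Set E2) (hΩ : IsOpen Ω)
    (hsub : closedBall (0:E2) t ⊆ Ω) (hu : ContDiffOn ℝ 2 u Ω) :
    (∫ x in ball (0:E2) t, ⟪fderiv ℝ u x x, lap u x⟫)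
      = t ^ 2 * (∫ θ in (0:ℝ)..(2 * π), ‖rderiv 0 u (t • circ θ)‖ ^ 2)
        - (t ^ 2 / 2) * ∫ θ in (0:ℝ)..(2 * π), gradSq u (t • circ θ) := by
  have hflux : ∀ θ, radialFlux (pohozaevField u 0) (pohozaevField u 1) (t, θ)
      = t ^ 2 * ‖rderiv 0 u (t • circ θ)‖ ^ 2 - t ^ 2 / 2 * gradSq u (t • circ θ) := fun θ => by
    have := pohozaevField_flux u (t • circ θ)
    simp only [map_smul, norm_smul, norm_circ, Real.norm_of_nonneg ht.le, PiLp.smul_apply,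
      smul_eq_mul, circ_apply_zero, circ_apply_one] at this
    rw [radialFlux, rderiv_zero_smul_circ u ht, this]
    ring
  have hDu : Continuous fun θ => fderiv ℝ u (t • circ θ) :=
    (hu.continuousOn_fderiv_of_isOpen hΩ one_le_two).comp_continuous (by fun_prop)
      fun θ => hsub (smul_circ_mem_closedBall (abs_of_pos ht).le)
  have h₁ : Continuous fun θ => ‖rderiv 0 u (t • circ θ)‖ ^ 2 := by
    simp only [rderiv_zero_smul_circ u ht]; fun_prop
  have h₂ : Continuous fun θ => gradSq u (t • circ θ) := by
    unfold gradSq pd; fun_prop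
  calc (∫ x in ball (0:E2) t, ⟪fderiv ℝ u x x, lap u x⟫)
      = ∫ x in ball (0:E2) t, (pd (pohozaevField u 0) 0 x + pd (pohozaevField u 1) 1 x) :=
        setIntegral_congr_fun measurableSet_ball fun x hx => (pd_pohozaevField_add
          (hu.contDiffAt (hΩ.mem_nhds (hsub (ball_subset_closedBall hx))))).symm
    _ = ∫ θ in (0:ℝ)..(2 * π), radialFlux (pohozaevField u 0) (pohozaevField u 1) (t, θ) :=
        integral_divergence_ball hΩ ht.le hsub (contDiffOn_pohozaevField hΩ hu 0)
          (contDiffOn_pohozaevField hΩ hu 1)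
    _ = _ := by
        simp only [hflux]
        rw [intervalIntegral.integral_sub ((h₁.intervalIntegrable _ _).const_mul _)
          ((h₂.intervalIntegrable _ _).const_mul _), intervalIntegral.integral_const_mul,
          intervalIntegral.integral_const_mul]

/-- For a `C²` map `u` on a neighborhood of the closed disc of radius `t`
centered at `0` in `ℝ²` with values in `ℝ^K`,
`∫_{B_t(0)} (x·∇u)·Δu dx = t² ∫₀^{2π} |∂_r u(te^{iθ})|² dθ − (t²/2) ∫₀^{2π} |∇u(te^{iθ})|² dθ`. -/
theorem stmt1 (K : ℕ) (hK : 1 ≤ K) (t : ℝ) (ht : 0 < t)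
    (u : E2 → EuclideanSpace ℝ (Fin K)) (Ω : Set E2) (hΩ : IsOpen Ω)
    (hsub : closedBall (0:E2) t ⊆ Ω) (hu : ContDiffOn ℝ 2 u Ω) :
    (∫ x in ball (0:E2) t, ⟪fderiv ℝ u x x, lap u x⟫)
      = t ^ 2 * (∫ θ in (0:ℝ)..(2 * π), ‖rderiv 0 u (t • circ θ)‖ ^ 2)
        - (t ^ 2 / 2) * ∫ θ in (0:ℝ)..(2 * π), gradSq u (t • circ θ) :=
  stmt1_general K t ht u Ω hΩ hsub hu
end
end

section
/- Let n ≥ 2 and let u_k : B₁(0) ⊆ ℝ² → ℝ^{n+1} be smooth maps with |u_k(x)| = 1 for all x, and suppose S_k := sup_{B₁(0)}|∇u_k| is finite for each k. Let α_k → 1 with α_k > 1, let x_k ∈ B₁(0), let λ_k ∈ (0,1) with λ_k → 0, let U ⊆ ℝ² be open with x_k + λ_k·U ⊆ B₁(0) for all large k, and suppose the rescaled maps v_k(x) := u_k(x_k + λ_k·x) converge to a C¹ map v : U → ℝ^{n+1} together with their first derivatives, uniformly on compact subsets of U, where ∇v(x̄) ≠ 0 for some x̄ ∈ U. If lim_{k→∞}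 S_k^{α_k−1} = 1, then lim_{k→∞} λ_k^{2−2α_k} = 1. (This is the implication, used in Proposition 1.4, that the condition liminf_{α→1}‖∇u_α‖_{C⁰}^{α−1} = 1 forces the concentration exponent μ = lim λ_k^{2−2α_k} of every bubble to equal 1.) -/
open MeasureTheory Metric Filter
open scoped Topology Real RealInnerProductSpace ENNReal NNReal

noncomputable section

/-! By the chain rule `∇v_k(x̄) = λ_k ∇u_k(x_k + λ_k x̄)`, and `∇v_k(x̄) → ∇v(x̄) ≠ 0`, so
eventually `λ_k⁻¹ ≤ C S_k` for a constant `C > 0`. As `λ_k < 1 < α_k`, this squeezes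
`1 ≤ λ_k^{1-α_k} ≤ (C S_k)^{α_k-1} → 1`, and `λ_k^{2-2α_k}` is the square of `λ_k^{1-α_k}`. -/

theorem ContinuousLinearMap.opNorm_le_sum_norm_apply_single {ι F : Type*} [Fintype ι]
    [DecidableEq ι] [NormedAddCommGroup F] [NormedSpace ℝ F]
    (L : EuclideanSpace ℝ ι →L[ℝ] F) :
    ‖L‖ ≤ ∑ i, ‖L (EuclideanSpace.single i 1)‖ := by
  refine L.opNorm_le_bound (by positivity) fun z => ?_
  calc ‖L z‖ = ‖∑ i, z i • L (EuclideanSpace.single i 1)‖ := by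
        conv_lhs => rw [← (EuclideanSpace.basisFun ι ℝ).sum_repr z]
        simp [map_sum]
    _ ≤ ∑ i, ‖z‖ * ‖L (EuclideanSpace.single i 1)‖ := by
        refine (norm_sum_le _ _).trans (Finset.sum_le_sum fun i _ => ?_)
        rw [norm_smul]
        gcongr
        exact PiLp.norm_apply_le z i
    _ = (∑ i, ‖L (EuclideanSpace.single i 1)‖) * ‖z‖ := by
        rw [Finset.sum_mul]; simp only [mul_comm]

section

variable {F : Type*} [NormedAddCommGroup F] [NormedSpace ℝ F]

theorem fderiv_comp_add_smul {E : Type*} [NormedAddCommGroup E] [NormedSpace ℝ E]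
    (f : E → F) (a : E) (c : ℝ) (z : E) :
    fderiv ℝ (fun w => f (a + c • w)) z = c • fderiv ℝ f (a + c • z) := by
  rw [fderiv_comp_smul (f := fun y => f (a + y)) c, fderiv_comp_add_left]

theorem norm_pd_le_sqrt_gradSq (u : E2 → F) (i : Fin 2) (y : E2) :
    ‖pd u i y‖ ≤ √(gradSq u y) := by
  refine Real.le_sqrt_of_sq_le ?_
  fin_cases i
  · exact le_add_of_nonneg_right (sq_nonneg _)
  · exact le_add_of_nonneg_left (sq_nonneg _)

theorem norm_fderiv_le_two_mul_sqrt_gradSq (u : E2 → F) (y : E2) :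
    ‖fderiv ℝ u y‖ ≤ 2 * √(gradSq u y) :=
  calc ‖fderiv ℝ u y‖ ≤ ∑ i, ‖pd u i y‖ := (fderiv ℝ u y).opNorm_le_sum_norm_apply_single
    _ ≤ 2 * √(gradSq u y) := by
      rw [Fin.sum_univ_two, two_mul]
      exact add_le_add (norm_pd_le_sqrt_gradSq u 0 y) (norm_pd_le_sqrt_gradSq u 1 y)

end

theorem Filter.Tendsto.rpow_of_one_le_of_le {ι : Type*} {l : Filter ι} {a b e : ι → ℝ}
    (hb : Tendsto (fun i => b i ^ e i) l (𝓝 1)) (ha : ∀ᶠ i in l, 1 ≤ a i)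
    (hab : ∀ᶠ i in l, a i ≤ b i) (he : ∀ᶠ i in l, 0 ≤ e i) :
    Tendsto (fun i => a i ^ e i) l (𝓝 1) := by
  refine tendsto_of_tendsto_of_tendsto_of_le_of_le' tendsto_const_nhds hb ?_ ?_
  · filter_upwards [ha, he] with i hai hei using Real.one_le_rpow hai hei
  · filter_upwards [ha, hab, he] with i hai habi hei
    exact Real.rpow_le_rpow (zero_le_one.trans hai) habi hei

theorem rpow_two_sub_two_mul_eq_sq {t : ℝ} (ht : 0 ≤ t) (s : ℝ) :
    t ^ (2 - 2 * s) = (t⁻¹ ^ (s - 1)) ^ 2 := by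
  rw [Real.inv_rpow ht, ← Real.rpow_neg ht, ← Real.rpow_natCast, ← Real.rpow_mul ht]
  ring_nf

theorem stmt19_general (n : ℕ)
    (u : ℕ → E2 → EuclideanSpace ℝ (Fin (n+1)))
    (hSfin : ∀ k, BddAbove ((fun y => Real.sqrt (gradSq (u k) y)) '' ball (0:E2) 1))
    (α : ℕ → ℝ) (hα : ∀ k, 1 < α k) (hαlim : Tendsto α atTop (𝓝 1))
    (x : ℕ → E2)
    (lam : ℕ → ℝ) (hlam : ∀ k, lam k ∈ Set.Ioo (0:ℝ) 1)
    (U : Set E2)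
    (hUin : ∀ᶠ k in atTop, ∀ z ∈ U, x k + lam k • z ∈ ball (0:E2) 1)
    (v : E2 → EuclideanSpace ℝ (Fin (n+1)))
    (hconv : ∀ K : Set E2, IsCompact K → K ⊆ U →
      TendstoUniformlyOn (fun k z => u k (x k + lam k • z)) v atTop K ∧
      TendstoUniformlyOn (fun k z => fderiv ℝ (fun w => u k (x k + lam k • w)) z)
        (fun z => fderiv ℝ v z) atTop K)
    (xbar : E2) (hxbar : xbar ∈ U) (hgrad : fderiv ℝ v xbar ≠ 0)
    (hS : Tendsto (fun k =>
        sSup ((fun y => Real.sqrt (gradSq (u k) y)) '' ball (0:E2) 1) ^ (α k - 1))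
      atTop (𝓝 1)) :
    Tendsto (fun k => lam k ^ (2 - 2 * α k)) atTop (𝓝 1) := by
  set S : ℕ → ℝ := fun k => sSup ((fun y => √(gradSq (u k) y)) '' ball (0:E2) 1)
  set c := ‖fderiv ℝ v xbar‖
  have hc : 0 < c / 4 := by positivity
  have hderiv : Tendsto (fun k => ‖fderiv ℝ (fun w => u k (x k + lam k • w)) xbar‖) atTop (𝓝 c) :=
    (tendstoUniformlyOn_singleton_iff_tendsto.mp
      (hconv {xbar} isCompact_singleton (Set.singleton_subset_iff.mpr hxbar)).2).norm
  have hscale : ∀ᶠ k in atTop, (lam k)⁻¹ ≤ S k / (c / 4) := by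
    filter_upwards [hUin, hderiv.eventually (lt_mem_nhds (half_lt_self (norm_pos_iff.mpr hgrad)))]
      with k hk hlt
    obtain ⟨hlam0, -⟩ := hlam k
    have hsup : ‖fderiv ℝ (u k) (x k + lam k • xbar)‖ ≤ 2 * S k :=
      (norm_fderiv_le_two_mul_sqrt_gradSq _ _).trans
        (mul_le_mul_of_nonneg_left (le_csSup (hSfin k) ⟨_, hk xbar hxbar, rfl⟩) zero_le_two)
    rw [fderiv_comp_add_smul, norm_smul, Real.norm_of_nonneg hlam0.le] at hlt
    rw [inv_le_iff_one_le_mul₀ hlam0, div_mul_eq_mul_div, le_div_iff₀ hc]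
    nlinarith
  have hS0 : ∀ k, 0 ≤ S k := fun k => Real.sSup_nonneg fun _ ⟨_, _, hy⟩ => hy ▸ Real.sqrt_nonneg _
  have hbound : Tendsto (fun k => (S k / (c / 4)) ^ (α k - 1)) atTop (𝓝 1) := by
    have hc1 : Tendsto (fun k => (c / 4) ^ (α k - 1)) atTop (𝓝 1) := by
      simpa using tendsto_const_nhds.rpow (hαlim.sub_const 1) (Or.inl hc.ne')
    have hquot := hS.div hc1 one_ne_zero
    rw [div_one] at hquot
    exact hquot.congr fun k => (Real.div_rpow (hS0 k) hc.le _).symm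
  have hmid := hbound.rpow_of_one_le_of_le
    (Eventually.of_forall fun k => one_le_inv₀ (hlam k).1 |>.mpr (hlam k).2.le) hscale
    (Eventually.of_forall fun k => sub_nonneg.mpr (hα k).le)
  simpa only [rpow_two_sub_two_mul_eq_sq (hlam _).1.le, one_pow] using hmid.pow 2

/-- if `S_k = sup_{B₁(0)} |∇u_k|` satisfies `S_k^{α_k−1} → 1`, then for any
bubble extracted at points `x_k` and scales `λ_k` (i.e. `u_k(x_k+λ_k·) → v` in `C¹_loc(U)`
with `∇v(x̄) ≠ 0` somewhere), the concentration exponent satisfies `λ_k^{2−2α_k} → 1`. -/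
theorem stmt19 (n : ℕ) (hn : 2 ≤ n)
    (u : ℕ → E2 → EuclideanSpace ℝ (Fin (n+1)))
    (hsmooth : ∀ k, ContDiffOn ℝ (⊤ : ℕ∞) (u k) (ball 0 1))
    (hsphere : ∀ k, ∀ y ∈ ball (0:E2) 1, ‖u k y‖ = 1)
    (hSfin : ∀ k, BddAbove ((fun y => Real.sqrt (gradSq (u k) y)) '' ball (0:E2) 1))
    (α : ℕ → ℝ) (hα : ∀ k, 1 < α k) (hαlim : Tendsto α atTop (𝓝 1))
    (x : ℕ → E2) (hx : ∀ k, x k ∈ ball (0:E2) 1)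
    (lam : ℕ → ℝ) (hlam : ∀ k, lam k ∈ Set.Ioo (0:ℝ) 1) (hlam0 : Tendsto lam atTop (𝓝 0))
    (U : Set E2) (hU : IsOpen U)
    (hUin : ∀ᶠ k in atTop, ∀ z ∈ U, x k + lam k • z ∈ ball (0:E2) 1)
    (v : E2 → EuclideanSpace ℝ (Fin (n+1))) (hv : ContDiffOn ℝ 1 v U)
    (hconv : ∀ K : Set E2, IsCompact K → K ⊆ U →
      TendstoUniformlyOn (fun k z => u k (x k + lam k • z)) v atTop K ∧
      TendstoUniformlyOn (fun k z => fderiv ℝ (fun w => u k (x k + lam k • w)) z)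
        (fun z => fderiv ℝ v z) atTop K)
    (xbar : E2) (hxbar : xbar ∈ U) (hgrad : fderiv ℝ v xbar ≠ 0)
    (hS : Tendsto (fun k =>
        sSup ((fun y => Real.sqrt (gradSq (u k) y)) '' ball (0:E2) 1) ^ (α k - 1))
      atTop (𝓝 1)) :
    Tendsto (fun k => lam k ^ (2 - 2 * α k)) atTop (𝓝 1) :=
  stmt19_general n u hSfin α hα hαlim x lam hlam U hUin v hconv xbar hxbar hgrad hS
end
end
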